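/- Let q > 1 be a real number. Let ρ₁ be a quantum state (positive semidefinite matrix with trace 1) of size d₁ and let ρ₂ be a pure quantum state (a positive semidefinite matrix of trace 1 and rank 1) of size d₂. Then equality holds in the norm inequality for the product state ρ = ρ₁ ⊗ ρ₂ (Kronecker product): 1 + ‖ρ₁ ⊗ ρ₂‖_q = ‖Tr₁(ρ₁ ⊗ ρ₂)‖_q + ‖Tr₂(ρ₁ ⊗ ρ₂)‖_q, i.e., 1 + ‖ρ₁ ⊗ ρ₂‖_q = ‖ρ₂‖_q + ‖ρ₁‖_q. -/

import Mathlib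

open Matrix ComplexOrder Kronecker

/-- `Tr[A^q]` for a Hermitian matrix `A`, where `A^q` is the matrix power obtained by raising
each eigenvalue of `A` to the (real) power `q`; defined as `0` if `A` is not Hermitian. -/
noncomputable def traceRpow {d : Type*} [Fintype d] [DecidableEq d]
    (q : ℝ) (A : Matrix d d ℂ) : ℝ :=
  if hA : A.IsHermitian then ∑ i, hA.eigenvalues i ^ q else 0

/-- The Schatten `q`-norm `‖A‖_q = (Tr[A^q])^{1/q}` of a positive semidefinite matrix `A`. -/
noncomputable def schattenNorm {d : Type*} [Fintype d] [DecidableEq d]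
    (q : ℝ) (A : Matrix d d ℂ) : ℝ :=
  traceRpow q A ^ (1 / q)

/-- The partial trace over the first tensor factor: `(Tr₁ρ)(j,j') = ∑ i, ρ((i,j),(i,j'))`. -/
noncomputable def ptrace1 {d₁ d₂ : ℕ}
    (ρ : Matrix (Fin d₁ × Fin d₂) (Fin d₁ × Fin d₂) ℂ) : Matrix (Fin d₂) (Fin d₂) ℂ :=
  Matrix.of fun j j' => ∑ i, ρ (i, j) (i, j')

/-- The partial trace over the second tensor factor: `(Tr₂ρ)(i,i') = ∑ j, ρ((i,j),(i',j))`. -/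
noncomputable def ptrace2 {d₁ d₂ : ℕ}
    (ρ : Matrix (Fin d₁ × Fin d₂) (Fin d₁ × Fin d₂) ℂ) : Matrix (Fin d₁) (Fin d₁) ℂ :=
  Matrix.of fun i i' => ∑ j, ρ (i, j) (i', j)

/-! The eigenvalues of `A ⊗ₖ B` are the products of those of `A` and `B` (diagonalize both
factors by unitaries `U`, `V`; then `U ⊗ₖ V` diagonalizes the product), so for positive
semidefinite factors `Tr[(A ⊗ₖ B)^q] = Tr[A^q] Tr[B^q]` and the Schatten norm is multiplicative.
A pure state has spectrum `{1, 0, …, 0}`, so its `q`-norm is `1` for `q ≠ 0`, whence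
`‖ρ₁ ⊗ₖ ρ₂‖_q = ‖ρ₁‖_q`. The partial traces of a product are `Tr₁(A ⊗ₖ B) = Tr A • B` and
`Tr₂(A ⊗ₖ B) = Tr B • A`, and both traces are `1`. -/

namespace Matrix.IsHermitian

open Polynomial

variable {𝕜 : Type*} [RCLike 𝕜] {m n : Type*} [Fintype m] [DecidableEq m] [Fintype n]
  [DecidableEq n] {A : Matrix m m 𝕜} {B : Matrix n n 𝕜}

theorem sum_comp_eigenvalues_of_charpoly_eq {ι : Type*} [Fintype ι] (hA : A.IsHermitian)
    {d : ι → ℝ} (h : A.charpoly = ∏ i, (X - C (d i : 𝕜))) (f : ℝ → ℝ) :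
    ∑ i, f (hA.eigenvalues i) = ∑ i, f (d i) := by
  have hroots : Finset.univ.val.map ((↑) ∘ hA.eigenvalues : m → 𝕜)
      = Finset.univ.val.map ((↑) ∘ d : ι → 𝕜) := by
    rw [← hA.roots_charpoly_eq_eigenvalues, h, roots_prod _ _ (by
      simp [Finset.prod_ne_zero_iff, X_sub_C_ne_zero])]
    simp
  have hmap : Finset.univ.val.map hA.eigenvalues = Finset.univ.val.map d := by
    rw [← Multiset.map_map, ← Multiset.map_map] at hroots
    exact Multiset.map_injective RCLike.ofReal_injective hroots
  have := congrArg (fun s => (s.map f).sum) hmap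
  simp only [Multiset.map_map] at this
  exact this

theorem charpoly_kronecker (hA : A.IsHermitian) (hB : B.IsHermitian) :
    (A ⊗ₖ B).charpoly
      = ∏ p : m × n, (X - C ((hA.eigenvalues p.1 * hB.eigenvalues p.2 : ℝ) : 𝕜)) := by
  conv_lhs => rw [hA.spectral_theorem, hB.spectral_theorem]
  simp only [Unitary.conjStarAlgAut_apply]
  rw [mul_kronecker_mul, mul_kronecker_mul, charpoly_mul_comm, ← mul_assoc, ← mul_kronecker_mul,
    Unitary.coe_star_mul_self, Unitary.coe_star_mul_self, one_kronecker_one, one_mul,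
    diagonal_kronecker_diagonal, charpoly_diagonal]
  simp

end Matrix.IsHermitian

section Schatten

variable {m n : Type*} [Fintype m] [DecidableEq m] [Fintype n] [DecidableEq n]
  {A : Matrix m m ℂ} {B : Matrix n n ℂ} {q : ℝ}

theorem traceRpow_nonneg (hA : A.PosSemidef) : 0 ≤ traceRpow q A := by
  rw [traceRpow, dif_pos hA.1]
  exact Finset.sum_nonneg fun i _ => Real.rpow_nonneg (hA.eigenvalues_nonneg i) q

theorem traceRpow_kronecker (hA : A.PosSemidef) (hB : B.PosSemidef) :
    traceRpow q (A ⊗ₖ B) = traceRpow q A * traceRpow q B := by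
  rw [traceRpow, dif_pos (hA.kronecker hB).1, traceRpow, dif_pos hA.1, traceRpow, dif_pos hB.1]
  refine ((hA.kronecker hB).1.sum_comp_eigenvalues_of_charpoly_eq
    (hA.1.charpoly_kronecker hB.1) (· ^ q)).trans ?_
  rw [Fintype.sum_prod_type, Finset.sum_mul_sum]
  refine Finset.sum_congr rfl fun i _ => Finset.sum_congr rfl fun j _ => ?_
  exact Real.mul_rpow (hA.eigenvalues_nonneg i) (hB.eigenvalues_nonneg j)

theorem schattenNorm_kronecker (hA : A.PosSemidef) (hB : B.PosSemidef) :
    schattenNorm q (A ⊗ₖ B) = schattenNorm q A * schattenNorm q B := by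
  rw [schattenNorm, traceRpow_kronecker hA hB,
    Real.mul_rpow (traceRpow_nonneg hA) (traceRpow_nonneg hB), schattenNorm, schattenNorm]

theorem traceRpow_eq_one_of_rank_eq_one (hA : A.IsHermitian) (htr : A.trace = 1)
    (hrank : A.rank = 1) (hq : q ≠ 0) : traceRpow q A = 1 := by
  rw [hA.rank_eq_card_non_zero_eigs, Fintype.card_eq_one_iff] at hrank
  obtain ⟨⟨i₀, _⟩, hi₀⟩ := hrank
  have hzero : ∀ i, i ≠ i₀ → hA.eigenvalues i = 0 := fun i hi => by
    by_contra h
    exact hi (congrArg Subtype.val (hi₀ ⟨i, h⟩))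
  have hsum : ∑ i, hA.eigenvalues i = hA.eigenvalues i₀ :=
    Finset.sum_eq_single_of_mem i₀ (Finset.mem_univ _) fun i _ hi => hzero i hi
  have hone : hA.eigenvalues i₀ = 1 := by
    rw [← hsum]
    exact RCLike.ofReal_injective (K := ℂ)
      (by simpa using hA.trace_eq_sum_eigenvalues.symm.trans htr)
  rw [traceRpow, dif_pos hA, Finset.sum_eq_single_of_mem i₀ (Finset.mem_univ _)
    fun i _ hi => by rw [hzero i hi, Real.zero_rpow hq], hone, Real.one_rpow]

theorem schattenNorm_eq_one_of_rank_eq_one (hA : A.IsHermitian) (htr : A.trace = 1)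
    (hrank : A.rank = 1) (hq : q ≠ 0) : schattenNorm q A = 1 := by
  rw [schattenNorm, traceRpow_eq_one_of_rank_eq_one hA htr hrank hq, Real.one_rpow]

end Schatten

theorem ptrace1_kronecker {d₁ d₂ : ℕ} (A : Matrix (Fin d₁) (Fin d₁) ℂ)
    (B : Matrix (Fin d₂) (Fin d₂) ℂ) : ptrace1 (A ⊗ₖ B) = A.trace • B := by
  ext j j'
  simp only [ptrace1, of_apply, kroneckerMap_apply, ← Finset.sum_mul, Matrix.smul_apply,
    smul_eq_mul, trace, diag_apply]

theorem ptrace2_kronecker {d₁ d₂ : ℕ} (A : Matrix (Fin d₁) (Fin d₁) ℂ)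
    (B : Matrix (Fin d₂) (Fin d₂) ℂ) : ptrace2 (A ⊗ₖ B) = B.trace • A := by
  ext i i'
  simp only [ptrace2, of_apply, kroneckerMap_apply, ← Finset.mul_sum, Matrix.smul_apply,
    smul_eq_mul, trace, diag_apply]
  exact mul_comm _ _

/-- For `q > 1`, a state `ρ₁` and a *pure* state `ρ₂` (rank one), equality holds in the norm
inequality for the product state `ρ = ρ₁ ⊗ ρ₂`:
`1 + ‖ρ₁ ⊗ ρ₂‖_q = ‖Tr₁(ρ₁ ⊗ ρ₂)‖_q + ‖Tr₂(ρ₁ ⊗ ρ₂)‖_q`, i.e.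
`1 + ‖ρ₁ ⊗ ρ₂‖_q = ‖ρ₂‖_q + ‖ρ₁‖_q`. -/
theorem schattenNorm_product_pure_eq {d₁ d₂ : ℕ} (q : ℝ) (hq : 1 < q)
    (ρ₁ : Matrix (Fin d₁) (Fin d₁) ℂ) (ρ₂ : Matrix (Fin d₂) (Fin d₂) ℂ)
    (hρ₁ : ρ₁.PosSemidef) (htr₁ : ρ₁.trace = 1)
    (hρ₂ : ρ₂.PosSemidef) (htr₂ : ρ₂.trace = 1) (hrank₂ : ρ₂.rank = 1) :
    1 + schattenNorm q (ρ₁ ⊗ₖ ρ₂)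
      = schattenNorm q (ptrace1 (ρ₁ ⊗ₖ ρ₂)) + schattenNorm q (ptrace2 (ρ₁ ⊗ₖ ρ₂))
    ∧ 1 + schattenNorm q (ρ₁ ⊗ₖ ρ₂) = schattenNorm q ρ₂ + schattenNorm q ρ₁ := by
  have hpure : schattenNorm q ρ₂ = 1 :=
    schattenNorm_eq_one_of_rank_eq_one hρ₂.1 htr₂ hrank₂ (by positivity)
  have hprod : schattenNorm q (ρ₁ ⊗ₖ ρ₂) = schattenNorm q ρ₁ := by
    rw [schattenNorm_kronecker hρ₁ hρ₂, hpure, mul_one]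
  have hmain : 1 + schattenNorm q (ρ₁ ⊗ₖ ρ₂) = schattenNorm q ρ₂ + schattenNorm q ρ₁ := by
    rw [hprod, hpure]
  refine ⟨?_, hmain⟩
  rwa [ptrace1_kronecker, ptrace2_kronecker, htr₁, htr₂, one_smul, one_smul]
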